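/- arXiv:2106.08787 — 2 statements merged into one kernel-verified Lean document; each statement's English description precedes it below -/
import Mathlib

section
/- Let A be the adjacency matrix of the halved hypercube graph ½Q_{n+1} = Q_n², the Cayley graph of (Z/2)^n with generating set {ε_i} ∪ {ε_i + ε_j : i < j}. Then τ_μ is an eigenvector of A with eigenvalue λ_d = ((2d − n − 1)² − n − 1)/2, where d = deg(μ). -/
/-!
The halved hypercube is the Cayley graph of `(ℤ/2)ⁿ` whose connection set `S` consists of the
vectors of Hamming weight one or two, so each character `τ_μ` is an eigenvector with eigenvalue
`∑_{γ ∈ S} τ_μ(γ)`. With `xᵢ = (-1)^{μᵢ}` this sum is `e₁(x) + e₂(x)`. Here `e₁(x) = n - 2d`, and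
Newton's identity `2 e₂ = e₁² - p₂` together with `xᵢ² = 1` gives `2 e₂(x) = (n - 2d)² - n`.
-/

open Finset Matrix

theorem ZMod.eq_zero_or_eq_one_of_two (a : ZMod 2) : a = 0 ∨ a = 1 := by
  decide +revert

theorem Matrix.mulVec_addChar {G R : Type*} [AddGroup G] [Fintype G] [CommSemiring R]
    (ψ : AddChar G R) (f : G → R) (A : Matrix G G R) (hA : ∀ α β, A α β = f (-α + β)) :
    A *ᵥ ψ = (∑ γ, f γ * ψ γ) • ⇑ψ := by
  ext α
  simp only [mulVec, dotProduct, hA, Pi.smul_apply, smul_eq_mul, sum_mul]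
  refine (Fintype.sum_equiv (Equiv.addLeft α) _ _ fun γ => ?_).symm
  rw [Equiv.coe_addLeft, neg_add_cancel_left, AddChar.map_add_eq_mul]
  ring

open MvPolynomial in
theorem two_mul_sum_powersetCard_two_prod {σ R : Type*} [Fintype σ] [CommRing R] (x : σ → R) :
    2 * ∑ t ∈ powersetCard 2 univ, ∏ i ∈ t, x i = (∑ i, x i) ^ 2 - ∑ i, x i ^ 2 := by
  have newton := congrArg (aeval x) (mul_esymm_eq_sum σ ℤ 2)
  rw [show {a ∈ antidiagonal 2 | a.1 < 2} = {(0, 2), (1, 1)} by decide,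
    sum_pair (by decide)] at newton
  simpa [esymm, psum, powersetCard_one, sq, sub_eq_add_neg, pow_succ] using newton

section WalshCharacters

variable {ι R : Type*} [Fintype ι] [CommRing R]

/-- The character `τ_μ(α) = (-1)^(α ⬝ᵥ μ)` of `(ℤ/2)^ι`. -/
def walshChar (μ : ι → ZMod 2) : AddChar (ι → ZMod 2) R :=
  (AddChar.zmodChar 2 (neg_one_sq : (-1 : R) ^ 2 = 1)).compAddMonoidHom
    (AddMonoidHom.mk' (· ⬝ᵥ μ) fun a b => add_dotProduct a b μ)

theorem walshChar_apply (μ α : ι → ZMod 2) :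
    walshChar μ α = (-1 : R) ^ (∑ i, (α i).val * (μ i).val) := by
  rw [← AddChar.zmodChar_apply' (neg_one_sq : (-1 : R) ^ 2 = 1)]
  simp [walshChar, dotProduct]

theorem walshChar_eq_prod (μ γ : ι → ZMod 2) :
    walshChar μ γ = ∏ i with γ i ≠ 0, (-1 : R) ^ (μ i).val := by
  rw [walshChar_apply, ← prod_pow_eq_pow_sum, prod_filter]
  refine prod_congr rfl fun i _ => ?_
  rcases (γ i).eq_zero_or_eq_one_of_two with h | h <;> simp [h, ZMod.val_one]

theorem sum_neg_one_pow_val (μ : ι → ZMod 2) :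
    ∑ i, (-1 : R) ^ (μ i).val = Fintype.card ι - 2 * hammingNorm μ := by
  have h (a : ZMod 2) : (-1 : R) ^ a.val = 1 - 2 * if a ≠ 0 then 1 else 0 := by
    rcases a.eq_zero_or_eq_one_of_two with rfl | rfl <;> norm_num [ZMod.val_one]
  simp only [h, sum_sub_distrib, ← mul_sum, sum_boole]
  simp [hammingNorm]

variable [DecidableEq ι]

theorem sum_walshChar_hammingNorm_eq (μ : ι → ZMod 2) (k : ℕ) :
    ∑ γ with hammingNorm γ = k, walshChar μ γ =
      ∑ t ∈ powersetCard k univ, ∏ i ∈ t, (-1 : R) ^ (μ i).val := by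
  refine sum_nbij' (fun γ => ({i | γ i ≠ 0} : Finset ι)) (fun t i => if i ∈ t then 1 else 0)
    ?_ ?_ ?_ ?_ fun γ _ => walshChar_eq_prod μ γ
  · simp [hammingNorm]
  · intro t ht
    simp_all [hammingNorm]
  · intro γ _
    ext i
    rcases (γ i).eq_zero_or_eq_one_of_two with h | h <;> simp [h]
  · intro t _
    ext i
    simp

theorem two_mul_sum_walshChar_hammingNorm_one_or_two (μ : ι → ZMod 2) :
    2 * ∑ γ with hammingNorm γ = 1 ∨ hammingNorm γ = 2, walshChar μ γ =
      ((2 * hammingNorm μ - Fintype.card ι - 1 : R) ^ 2 - Fintype.card ι - 1) := by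
  have hsq : ∑ i, ((-1 : R) ^ (μ i).val) ^ 2 = Fintype.card ι := by
    simp [← pow_mul, pow_mul']
  rw [filter_or, sum_union (disjoint_filter.mpr fun _ _ h1 h2 => by omega),
    sum_walshChar_hammingNorm_eq, sum_walshChar_hammingNorm_eq, mul_add,
    two_mul_sum_powersetCard_two_prod, hsq, powersetCard_one, sum_map]
  simp only [prod_singleton, Function.Embedding.coeFn_mk, sum_neg_one_pow_val]
  ring

end WalshCharacters

/-- For the adjacency matrix of the halved hypercube graph `½Q_{n+1} = Q_n²`
(vertices `(ℤ/2)^n`, adjacency: differ in exactly one or exactly two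
coordinates), each character `τ_μ` is an eigenvector with eigenvalue
`((2d - n - 1)² - n - 1)/2` where `d = deg μ`. -/
theorem halved_hypercube_character_eigenvector (n : ℕ) (μ : Fin n → ZMod 2)
    (A : Matrix (Fin n → ZMod 2) (Fin n → ZMod 2) ℂ)
    (hA : ∀ α β, A α β =
      if (Finset.univ.filter (fun i => α i ≠ β i)).card = 1 ∨
         (Finset.univ.filter (fun i => α i ≠ β i)).card = 2 then 1 else 0) :
    A.mulVec (fun α => (-1 : ℂ) ^ (∑ i, (α i).val * (μ i).val)) =
      (((2 * ((Finset.univ.filter (fun i => μ i ≠ 0)).card : ℂ) - n - 1) ^ 2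
          - n - 1) / 2) •
        (fun α => (-1 : ℂ) ^ (∑ i, (α i).val * (μ i).val)) := by
  have hCayley : ∀ α β, A α β =
      if hammingNorm (-α + β) = 1 ∨ hammingNorm (-α + β) = 2 then 1 else 0 := by
    intro α β
    rw [hA, ← hammingDist_eq_hammingNorm]
    rfl
  have hτ : (fun α => (-1 : ℂ) ^ (∑ i, (α i).val * (μ i).val)) = walshChar μ :=
    funext fun α => (walshChar_apply μ α).symm
  rw [hτ, mulVec_addChar _
    (fun γ => if hammingNorm γ = 1 ∨ hammingNorm γ = 2 then 1 else 0) A hCayley]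
  congr 1
  have heigen := two_mul_sum_walshChar_hammingNorm_one_or_two (R := ℂ) μ
  rw [sum_filter, Fintype.card_fin] at heigen
  rw [eq_div_iff two_ne_zero, mul_comm]
  simp only [boole_mul]
  exact heigen
end

section
/- The spectrum of the Hamming graph H(n,m) (for m ≥ 1) consists of the eigenvalues m(n−k) − n = n(m−1) − mk for k = 0,...,n, where the eigenvalue n(m−1) − mk has multiplicity binomial(n,k)·(m−1)^k. -/
open Polynomial Matrix Finset

section aux
variable (n m : ℕ) [NeZero m]

-- counting lemma
lemma hamming_card_fiber (k : ℕ) :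
    (univ.filter fun c : Fin n → ZMod m =>
      (univ.filter fun i => c i ≠ 0).card = k).card = n.choose k * (m - 1) ^ k := by
  classical
  have h2 : ∀ s : Finset (Fin n),
      (univ.filter fun c : Fin n → ZMod m => univ.filter (fun i => c i ≠ 0) = s).card
        = (m - 1) ^ s.card := by
    intro s
    have he : (univ.filter fun c : Fin n → ZMod m => univ.filter (fun i => c i ≠ 0) = s)
        = Fintype.piFinset (fun i => if i ∈ s then (univ : Finset (ZMod m)).erase 0 else {0}) := by
      ext c
      simp only [mem_filter, mem_univ, true_and, Fintype.mem_piFinset, Finset.ext_iff,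
        mem_filter, mem_univ, true_and]
      constructor
      · intro h i
        by_cases hi : i ∈ s <;> simp [hi, mem_erase, ← h i]
        · exact (h i).mpr hi
        · by_contra hc; exact hi ((h i).mp hc)
      · intro h i
        specialize h i
        by_cases hi : i ∈ s <;> simp [hi] at h <;> simp [hi, h]
    rw [he, Fintype.card_piFinset]
    have : ∀ i : Fin n, ((if i ∈ s then (univ : Finset (ZMod m)).erase 0 else {0}).card)
        = if i ∈ s then m - 1 else 1 := by
      intro i
      split_ifs
      · rw [Finset.card_erase_of_mem (mem_univ _), card_univ, ZMod.card]
      · simp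
    simp_rw [this]
    rw [Finset.prod_ite_mem, Finset.univ_inter, Finset.prod_const]
  have h1 : (univ.filter fun c : Fin n → ZMod m => (univ.filter fun i => c i ≠ 0).card = k)
      = (Finset.powersetCard k (univ : Finset (Fin n))).biUnion
          (fun s => univ.filter fun c => univ.filter (fun i => c i ≠ 0) = s) := by
    ext c
    simp only [mem_filter, mem_univ, true_and, mem_biUnion, mem_powersetCard_univ]
    constructor
    · intro h; exact ⟨_, h, rfl⟩
    · rintro ⟨s, hs, rfl⟩; exact hs
  rw [h1, Finset.card_biUnion]
  · simp_rw [h2]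
    rw [Finset.sum_congr rfl (fun s hs => by rw [(mem_powersetCard_univ.mp hs : s.card = k)]),
      Finset.sum_const, Finset.card_powersetCard, card_univ, Fintype.card_fin, smul_eq_mul]
  · intro s _ t _ hst
    simp only [Finset.disjoint_left, mem_filter]
    rintro c ⟨_, rfl⟩ ⟨_, h⟩
    exact hst h

end aux

lemma hamming_nbr_decomp {n m : ℕ} [NeZero m] (α : Fin n → ZMod m) :
    (univ.filter fun β : Fin n → ZMod m => (univ.filter fun i => α i ≠ β i).card = 1)
      = (univ : Finset (Fin n)).biUnion
          (fun i => (univ.erase (α i)).image (fun t => Function.update α i t)) := by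
  ext β
  simp only [mem_filter, mem_univ, true_and, mem_biUnion, mem_image, mem_erase]
  constructor
  · intro h
    obtain ⟨i, hi⟩ := Finset.card_eq_one.mp h
    have hmem : ∀ j, α j ≠ β j ↔ j = i := by
      intro j
      rw [← Finset.mem_singleton, ← hi, mem_filter]
      simp
    refine ⟨i, β i, ⟨?_, trivial⟩, ?_⟩
    · exact fun hc => ((hmem i).mpr rfl) hc.symm
    · funext j
      by_cases hj : j = i
      · subst hj; simp
      · rw [Function.update_of_ne hj]
        by_contra hc
        exact hj ((hmem j).mp (fun he => hc he))
  · rintro ⟨i, t, ⟨ht, -⟩, rfl⟩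
    have : (univ.filter fun j => α j ≠ Function.update α i t j) = {i} := by
      ext j
      simp only [mem_filter, mem_univ, true_and, mem_singleton]
      by_cases hj : j = i
      · subst hj; simp [Ne.symm ht]
      · simp only [Function.update_of_ne hj]
        simpa using hj
    rw [this, Finset.card_singleton]

lemma hamming_sum_nbrs {n m : ℕ} [NeZero m] (α : Fin n → ZMod m) (f : (Fin n → ZMod m) → ℂ) :
    ∑ β ∈ (univ.filter fun β : Fin n → ZMod m =>
        (univ.filter fun i => α i ≠ β i).card = 1), f β
      = ∑ i : Fin n, ∑ t ∈ univ.erase (α i), f (Function.update α i t) := by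
  rw [hamming_nbr_decomp, Finset.sum_biUnion]
  · refine Finset.sum_congr rfl fun i _ => ?_
    rw [Finset.sum_image]
    intro x _ y _ hxy
    have := congrFun hxy i
    simpa using this
  · intro i _ j _ hij
    simp only [Finset.disjoint_left, mem_image, mem_erase]
    rintro β ⟨t, ⟨ht, -⟩, rfl⟩ ⟨s, ⟨hs, -⟩, he⟩
    have := congrFun he i
    rw [Function.update_of_ne hij, Function.update_self] at this
    exact ht this.symm

lemma charmatrix_eq_aux {N : Type*} [Fintype N] [DecidableEq N] (M : Matrix N N ℂ) :
    charmatrix M = Matrix.diagonal (fun _ => (X : ℂ[X])) - M.map C := by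
  ext i j
  by_cases h : i = j
  · subst h; simp [charmatrix_apply_eq, Matrix.diagonal]
  · simp [charmatrix_apply_ne _ _ _ h, Matrix.diagonal_apply_ne _ h]

lemma charpoly_conj_aux {N : Type*} [Fintype N] [DecidableEq N]
    (P Q A : Matrix N N ℂ) (hPQ : P * Q = 1) :
    (P * A * Q).charpoly = A.charpoly := by
  have hmap : ∀ (M₁ M₂ : Matrix N N ℂ), (M₁ * M₂).map (C : ℂ →+* ℂ[X])
      = M₁.map C * M₂.map C := fun M₁ M₂ => Matrix.map_mul
  have h1 : charmatrix (P * A * Q) = P.map C * charmatrix A * Q.map C := by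
    rw [charmatrix_eq_aux, charmatrix_eq_aux, Matrix.mul_sub, Matrix.sub_mul, hmap, hmap]
    congr 1
    have hd : Matrix.diagonal (fun _ : N => (X : ℂ[X])) = (X : ℂ[X]) • (1 : Matrix N N ℂ[X]) := by
      rw [smul_one_eq_diagonal]
    rw [hd, Matrix.mul_smul, Matrix.mul_one, Matrix.smul_mul, ← hmap, hPQ]
    simp
  rw [Matrix.charpoly, h1, det_mul, det_mul, Matrix.charpoly]
  have h2 : (P.map (C : ℂ →+* ℂ[X])).det * (charmatrix A).det * (Q.map C).det
      = ((P.map (C : ℂ →+* ℂ[X])) * (Q.map C)).det * (charmatrix A).det := by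
    rw [det_mul]; ring
  rw [h2, ← hmap, hPQ]
  simp

lemma charpoly_diagonal_aux {N : Type*} [Fintype N] [DecidableEq N] (d : N → ℂ) :
    (Matrix.diagonal d).charpoly = ∏ i, (X - C (d i)) := by
  rw [Matrix.charpoly]
  have h : charmatrix (Matrix.diagonal d) = Matrix.diagonal (fun i => X - C (d i)) := by
    ext i j
    by_cases h : i = j
    · subst h; simp [charmatrix_apply_eq]
    · simp [charmatrix_apply_ne _ _ _ h, Matrix.diagonal_apply_ne _ h]
  rw [h, Matrix.det_diagonal]

section chars
variable (m : ℕ) [NeZero m]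

noncomputable abbrev hψ : AddChar (ZMod m) ℂ := ZMod.stdAddChar

lemma hψ_sum (b : ZMod m) : ∑ x : ZMod m, hψ m (x * b) = if b = 0 then (m : ℂ) else 0 := by
  have := AddChar.sum_mulShift b (ZMod.isPrimitive_stdAddChar m)
  rw [ZMod.card] at this
  simpa using this

variable (n : ℕ)

noncomputable def hP : Matrix (Fin n → ZMod m) (Fin n → ZMod m) ℂ :=
  fun α c => ∏ i, hψ m (α i * c i)

noncomputable def hD : Matrix (Fin n → ZMod m) (Fin n → ZMod m) ℂ :=
  Matrix.diagonal (fun c => (m : ℂ) * (univ.filter fun i => c i = 0).card - n)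

lemma hAP (A : Matrix (Fin n → ZMod m) (Fin n → ZMod m) ℂ)
    (hA : ∀ α β, A α β =
      if (Finset.univ.filter (fun i => α i ≠ β i)).card = 1 then 1 else 0) :
    A * hP m n = hP m n * hD m n := by
  ext α c
  rw [mul_apply, hD, Matrix.mul_diagonal]
  simp_rw [hA, ite_mul, one_mul, zero_mul]
  rw [← Finset.sum_filter,
    hamming_sum_nbrs α (fun β => hP m n β c)]
  have stepA : ∀ (i : Fin n) (t : ZMod m), hP m n (Function.update α i t) c
      = hψ m (t * c i) * ∏ j ∈ univ.erase i, hψ m (α j * c j) := by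
    intro i t
    rw [hP, ← Finset.mul_prod_erase univ _ (mem_univ i), Function.update_self]
    congr 1
    exact Finset.prod_congr rfl fun j hj =>
      by rw [Function.update_of_ne (Finset.mem_erase.mp hj).1]
  have hfull : ∀ i : Fin n, hψ m (α i * c i) * ∏ j ∈ univ.erase i, hψ m (α j * c j)
      = hP m n α c := by
    intro i
    simp only [hP]
    exact Finset.mul_prod_erase univ (fun j => hψ m (α j * c j)) (mem_univ i)
  have stepB : ∀ i : Fin n, ∑ t ∈ univ.erase (α i), hP m n (Function.update α i t) c
      = ((if c i = 0 then (m : ℂ) else 0) - hψ m (α i * c i))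
          * ∏ j ∈ univ.erase i, hψ m (α j * c j) := by
    intro i
    simp_rw [stepA i]
    rw [← Finset.sum_mul, Finset.sum_erase_eq_sub (mem_univ _), hψ_sum]
  simp_rw [stepB, sub_mul, Finset.sum_sub_distrib]
  have step2 : ∑ i : Fin n, hψ m (α i * c i) * ∏ j ∈ univ.erase i, hψ m (α j * c j)
      = (n : ℂ) * hP m n α c := by
    simp_rw [hfull]
    rw [Finset.sum_const, card_univ, Fintype.card_fin, nsmul_eq_mul]
  have step1 : ∑ i : Fin n, (if c i = 0 then (m : ℂ) else 0)
        * ∏ j ∈ univ.erase i, hψ m (α j * c j)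
      = (m : ℂ) * (univ.filter fun i => c i = 0).card * hP m n α c := by
    have per : ∀ i : Fin n, (if c i = 0 then (m : ℂ) else 0)
          * ∏ j ∈ univ.erase i, hψ m (α j * c j)
        = (if c i = 0 then (m : ℂ) else 0) * hP m n α c := by
      intro i
      by_cases h : c i = 0
      · simp only [if_pos h]
        congr 1
        rw [← hfull i, h, mul_zero, AddChar.map_zero_eq_one, one_mul]
      · simp [h]
    simp_rw [per]
    rw [← Finset.sum_mul, Finset.sum_ite, Finset.sum_const, Finset.sum_const_zero, add_zero,
      nsmul_eq_mul, mul_comm ((univ.filter fun i => c i = 0).card : ℂ) (m : ℂ)]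
  rw [step1, step2]
  ring
end chars


lemma hψ_sum_prod (m : ℕ) [NeZero m] (n : ℕ) (d : Fin n → ZMod m) :
    ∑ c : Fin n → ZMod m, ∏ i, hψ m (c i * d i)
      = ∏ i, (if d i = 0 then (m : ℂ) else 0) := by
  rw [← Fintype.piFinset_univ,
    ← Finset.prod_univ_sum (fun _ : Fin n => (univ : Finset (ZMod m)))
      (fun i x => hψ m (x * d i))]
  simp [hψ_sum]

section mats

variable (m : ℕ) [NeZero m] (n : ℕ)

noncomputable def hQ : Matrix (Fin n → ZMod m) (Fin n → ZMod m) ℂ :=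
  fun c α => ((m : ℂ) ^ n)⁻¹ * ∏ i, hψ m (-(α i * c i))

lemma hmn_ne : ((m : ℂ) ^ n) ≠ 0 :=
  pow_ne_zero _ (Nat.cast_ne_zero.mpr (NeZero.ne m))

lemma hPQ : hP m n * hQ m n = 1 := by
  ext α β
  rw [mul_apply]
  have : ∀ c, hP m n α c * hQ m n c β
      = ((m : ℂ) ^ n)⁻¹ * ∏ i, hψ m (c i * (α i - β i)) := by
    intro c
    have : hP m n α c * hQ m n c β = ((m : ℂ) ^ n)⁻¹ *
        ((∏ i, hψ m (α i * c i)) * ∏ i, hψ m (-(β i * c i))) := by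
      rw [hP, hQ]; ring
    rw [this, ← Finset.prod_mul_distrib]
    congr 1
    refine Finset.prod_congr rfl fun i _ => ?_
    rw [← AddChar.map_add_eq_mul]
    ring_nf
  simp_rw [this, ← Finset.mul_sum, hψ_sum_prod m n]
  by_cases h : α = β
  · subst h
    simp [inv_mul_cancel₀ (hmn_ne m n)]
  · rw [Matrix.one_apply_ne h]
    obtain ⟨i, hi⟩ := Function.ne_iff.mp h
    rw [Finset.prod_eq_zero (Finset.mem_univ i) (by simp [sub_eq_zero, hi]), mul_zero]

lemma hQP : hQ m n * hP m n = 1 := by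
  ext γ δ
  rw [mul_apply]
  have : ∀ α, hQ m n γ α * hP m n α δ
      = ((m : ℂ) ^ n)⁻¹ * ∏ i, hψ m (α i * (δ i - γ i)) := by
    intro α
    have : hQ m n γ α * hP m n α δ = ((m : ℂ) ^ n)⁻¹ *
        ((∏ i, hψ m (-(α i * γ i))) * ∏ i, hψ m (α i * δ i)) := by
      rw [hP, hQ]; ring
    rw [this, ← Finset.prod_mul_distrib]
    congr 1
    refine Finset.prod_congr rfl fun i _ => ?_
    rw [← AddChar.map_add_eq_mul]
    ring_nf
  simp_rw [this, ← Finset.mul_sum, hψ_sum_prod m n]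
  by_cases h : γ = δ
  · subst h
    simp [inv_mul_cancel₀ (hmn_ne m n)]
  · rw [Matrix.one_apply_ne h]
    obtain ⟨i, hi⟩ := Function.ne_iff.mp h
    rw [Finset.prod_eq_zero (Finset.mem_univ i) (by simp [sub_eq_zero, Ne.symm hi]), mul_zero]


end mats

/-- The spectrum of the Hamming graph `H(n,m)` (`m ≥ 1`): the characteristic
polynomial of its adjacency matrix is
`∏_{k=0}^{n} (X - (n(m-1) - mk))^(binom n k · (m-1)^k)`, i.e. the eigenvalues
are `n(m-1) - mk` with multiplicity `binom n k · (m-1)^k`. -/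
theorem hamming_spectrum (n m : ℕ) [NeZero m] (hm : 1 ≤ m)
    (A : Matrix (Fin n → ZMod m) (Fin n → ZMod m) ℂ)
    (hA : ∀ α β, A α β =
      if (Finset.univ.filter (fun i => α i ≠ β i)).card = 1 then 1 else 0) :
    A.charpoly = ∏ k ∈ Finset.range (n + 1),
      (Polynomial.X - Polynomial.C ((n : ℂ) * ((m : ℂ) - 1) - m * k)) ^
        (n.choose k * (m - 1) ^ k) := by
  classical
  have hAP' := hAP m n A hA
  have hPQ' := hPQ m n
  have hA_eq : A = hP m n * hD m n * hQ m n := by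
    calc A = A * (hP m n * hQ m n) := by rw [hPQ', mul_one]
      _ = (A * hP m n) * hQ m n := by rw [mul_assoc]
      _ = hP m n * hD m n * hQ m n := by rw [hAP']
  rw [hA_eq, charpoly_conj_aux _ _ _ hPQ', hD, charpoly_diagonal_aux]
  have hk : ∀ c : Fin n → ZMod m, c ∈ (univ : Finset (Fin n → ZMod m)) →
      (univ.filter fun i => c i ≠ 0).card ∈ Finset.range (n + 1) := by
    intro c _
    exact mem_range.mpr (Nat.lt_succ_of_le (le_trans (Finset.card_filter_le _ _) (by simp)))
  rw [← Finset.prod_fiberwise_of_maps_to hk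
    (fun c => X - C ((m : ℂ) * (univ.filter fun i => c i = 0).card - n))]
  refine Finset.prod_congr rfl fun k hk' => ?_
  have hkn : k ≤ n := Nat.lt_succ_iff.mp (mem_range.mp hk')
  have inner_eq : ∀ c ∈ (univ : Finset (Fin n → ZMod m)).filter
      (fun c => (univ.filter fun i => c i ≠ 0).card = k),
      X - C ((m : ℂ) * (univ.filter fun i => c i = 0).card - n)
        = X - C ((n : ℂ) * ((m : ℂ) - 1) - m * k) := by
    intro c hc
    have hc' : (univ.filter fun i => c i ≠ 0).card = k := (mem_filter.mp hc).2
    have hz : (univ.filter fun i => c i = 0).card = n - k := by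
      have := Finset.card_filter_add_card_filter_not
        (s := (univ : Finset (Fin n))) (p := fun i => c i = 0)
      rw [Finset.card_univ, Fintype.card_fin] at this
      have hfe : (univ.filter fun i => ¬ c i = 0).card = k := hc'
      omega
    rw [hz]
    congr 1
    have : ((n - k : ℕ) : ℂ) = (n : ℂ) - k := by
      push_cast [Nat.cast_sub hkn]; ring
    rw [this]; ring
  rw [Finset.prod_congr rfl inner_eq, Finset.prod_const, hamming_card_fiber]
end
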